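/- arXiv:1506.02827 — 4 statements merged into one kernel-verified Lean document; each statement's English description precedes it below -/
import Mathlib

section
/- The locally resonant granular chain ü_n = (u_{n−1} − u_n)_+^α − (u_n − u_{n+1})_+^α − κ(u_n − v_n), ρv̈_n = κ(u_n − v_n) (n ∈ ℤ, α > 1, κ, ρ > 0) admits no nontrivial time-periodic bright breather: if (u,v) is a T-periodic solution with ‖u_n − u_{n−1}‖_{L^∞(0,T)} → 0 as n → ±∞, then (u_{n−1}(t) − u_n(t))_+ = 0 for all n and t, i.e. the Hertzian interaction forces vanish identically and (u,v) solves the linear uncoupled system ü_n = κ(v_n − u_n), ρv̈_n = κ(u_n − v_n). -/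
/-!
Adding the two equations at site `n` gives `ü_n + ρ v̈_n = F_n - F_{n+1}` with the Hertzian force
`F_n = (u_{n-1} - u_n)_+^α`. Integrated over a period the left side vanishes, so the mean of `F_n`
over a period does not depend on `n`. The decay of the strains makes this mean arbitrarily small,
hence zero, and a continuous nonnegative periodic function with zero mean vanishes identically.
-/

open MeasureTheory Filter Topology

namespace Function.Periodic

variable {T : ℝ}

theorem intervalIntegral_deriv_eq_zero {f : ℝ → ℝ} (hf : ContDiff ℝ 1 f) (hp : Periodic f T) :
    ∫ t in (0 : ℝ)..T, deriv f t = 0 := by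
  rw [intervalIntegral.integral_deriv_eq_sub (fun x _ => hf.differentiable one_ne_zero x)
    ((hf.continuous_deriv le_rfl).intervalIntegrable _ _), hp.eq, sub_self]

theorem intervalIntegral_deriv_deriv_eq_zero {f : ℝ → ℝ} (hf : ContDiff ℝ 2 f)
    (hp : Periodic f T) : ∫ t in (0 : ℝ)..T, deriv (deriv f) t = 0 := by
  have hp' : Periodic (deriv f) T := fun x => by
    rw [← deriv_comp_add_const, show (fun y => f (y + T)) = f from funext hp]
  exact intervalIntegral_deriv_eq_zero (hf.deriv' (n := 1)) hp'

theorem eq_zero_of_intervalIntegral_eq_zero {g : ℝ → ℝ} (hT : 0 < T) (hp : Periodic g T)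
    (hc : Continuous g) (hg : 0 ≤ g) (hI : ∫ t in (0 : ℝ)..T, g t = 0) : g = 0 := by
  funext t
  by_contra hne
  have hpos : 0 < ∫ s in t..t + T, g s :=
    intervalIntegral.integral_pos (by linarith) hc.continuousOn (fun s _ => hg s)
      ⟨t, ⟨le_rfl, by linarith⟩, (hg t).lt_of_ne' hne⟩
  rw [hp.intervalIntegral_add_eq t 0, zero_add, hI] at hpos
  exact hpos.false

end Function.Periodic

theorem nonpos_of_forall_le_rpow_mul {a C α : ℝ} (hα : 0 < α) (h : ∀ ε > 0, a ≤ ε ^ α * C) :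
    a ≤ 0 := by
  have hlim : Tendsto (fun ε : ℝ => ε ^ α * C) (𝓝[>] 0) (𝓝 0) := by
    have h0 : Tendsto (fun ε : ℝ => ε ^ α) (𝓝[>] 0) (𝓝 0) := by
      simpa [Real.zero_rpow hα.ne'] using
        (Real.continuousAt_rpow_const 0 α (Or.inr hα.le)).tendsto.mono_left nhdsWithin_le_nhds
    simpa using h0.mul_const C
  exact ge_of_tendsto hlim (eventually_nhdsWithin_of_forall fun ε hε => h ε hε)

noncomputable def hertzForce (α : ℝ) (u : ℤ → ℝ → ℝ) (n : ℤ) (t : ℝ) : ℝ :=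
  max (u (n - 1) t - u n t) 0 ^ α

section hertzForce

variable {α T : ℝ} {u : ℤ → ℝ → ℝ} {n : ℤ}

theorem hertzForce_nonneg (t : ℝ) : 0 ≤ hertzForce α u n t :=
  Real.rpow_nonneg (le_max_right _ _) α

theorem hertzForce_succ (t : ℝ) :
    hertzForce α u (n + 1) t = max (u n t - u (n + 1) t) 0 ^ α := by
  simp only [hertzForce, add_sub_cancel_right]

theorem hertzForce_eq_zero_iff (hα : α ≠ 0) (t : ℝ) :
    hertzForce α u n t = 0 ↔ max (u (n - 1) t - u n t) 0 = 0 :=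
  Real.rpow_eq_zero (le_max_right _ _) hα

theorem continuous_hertzForce (hα : 0 ≤ α) (hu : ∀ n, Continuous (u n)) :
    Continuous (hertzForce α u n) :=
  (Real.continuous_rpow_const hα).comp (((hu _).sub (hu _)).max continuous_const)

theorem periodic_hertzForce (hp : ∀ n, Function.Periodic (u n) T) :
    Function.Periodic (hertzForce α u n) T := fun t => by
  simp only [hertzForce, hp (n - 1) t, hp n t]

theorem hertzForce_le_rpow (hα : 0 ≤ α) {ε t : ℝ} (h : |u n t - u (n - 1) t| ≤ ε) :
    hertzForce α u n t ≤ ε ^ α := by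
  refine Real.rpow_le_rpow (le_max_right _ _) (max_le ?_ ((abs_nonneg _).trans h)) hα
  linarith [(abs_le.mp h).1]

theorem intervalIntegral_hertzForce_le (hα : 0 ≤ α) (hT : 0 ≤ T) {ε : ℝ}
    (h : ∀ t, |u n t - u (n - 1) t| ≤ ε) :
    ∫ t in (0 : ℝ)..T, hertzForce α u n t ≤ ε ^ α * T := by
  have := intervalIntegral.norm_integral_le_of_norm_le_const (a := 0) (b := T)
    (f := hertzForce α u n) fun t _ => by
      rw [Real.norm_of_nonneg (hertzForce_nonneg t)]
      exact hertzForce_le_rpow hα (h t)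
  rw [sub_zero, abs_of_nonneg hT] at this
  exact (Real.le_norm_self _).trans this

theorem intervalIntegral_hertzForce_succ {κ ρ : ℝ} {v : ℤ → ℝ → ℝ} (hα : 0 ≤ α)
    (hu : ∀ n, ContDiff ℝ 2 (u n)) (hv : ContDiff ℝ 2 (v n))
    (hperu : Function.Periodic (u n) T) (hperv : Function.Periodic (v n) T)
    (heq1 : ∀ t, deriv (deriv (u n)) t =
      hertzForce α u n t - hertzForce α u (n + 1) t - κ * (u n t - v n t))
    (heq2 : ∀ t, ρ * deriv (deriv (v n)) t = κ * (u n t - v n t)) :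
    ∫ t in (0 : ℝ)..T, hertzForce α u (n + 1) t = ∫ t in (0 : ℝ)..T, hertzForce α u n t := by
  have hF (m : ℤ) : IntervalIntegrable (hertzForce α u m) volume 0 T :=
    (continuous_hertzForce hα fun k => (hu k).continuous).intervalIntegrable _ _
  have hdd {f : ℝ → ℝ} (hf : ContDiff ℝ 2 f) : Continuous (deriv (deriv f)) :=
    (hf.deriv' (n := 1)).continuous_deriv le_rfl
  have hbalance : ∀ t, hertzForce α u n t - hertzForce α u (n + 1) t =
      deriv (deriv (u n)) t + ρ * deriv (deriv (v n)) t := fun t => by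
    linarith [heq1 t, heq2 t]
  have hzero : ∫ t in (0 : ℝ)..T, (hertzForce α u n t - hertzForce α u (n + 1) t) = 0 := by
    simp only [hbalance]
    rw [intervalIntegral.integral_add (g := fun t => ρ * deriv (deriv (v n)) t)
        ((hdd (hu n)).intervalIntegrable _ _)
        ((continuous_const.mul (hdd hv)).intervalIntegrable _ _),
      intervalIntegral.integral_const_mul, hperu.intervalIntegral_deriv_deriv_eq_zero (hu n),
      hperv.intervalIntegral_deriv_deriv_eq_zero hv, mul_zero, add_zero]
  rw [intervalIntegral.integral_sub (hF n) (hF (n + 1))] at hzero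
  linarith

end hertzForce

theorem stmt5_general (α κ ρ T : ℝ) (hα : 1 < α) (hT : 0 < T)
    (u v : ℤ → ℝ → ℝ)
    (hu2 : ∀ n, ContDiff ℝ 2 (u n)) (hv2 : ∀ n, ContDiff ℝ 2 (v n))
    (hperu : ∀ n, Function.Periodic (u n) T)
    (hperv : ∀ n, Function.Periodic (v n) T)
    (heq1 : ∀ n t, deriv (deriv (u n)) t =
      (max (u (n-1) t - u n t) 0) ^ α - (max (u n t - u (n+1) t) 0) ^ α
        - κ * (u n t - v n t))
    (heq2 : ∀ n t, ρ * deriv (deriv (v n)) t = κ * (u n t - v n t))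
    (hdecay : ∀ ε > (0:ℝ), ∃ N : ℕ, ∀ n : ℤ, (N : ℤ) ≤ |n| →
      ∀ t : ℝ, |u n t - u (n-1) t| ≤ ε) :
    (∀ n t, max (u (n-1) t - u n t) 0 = 0) ∧
    (∀ n t, deriv (deriv (u n)) t = κ * (v n t - u n t)) ∧
    (∀ n t, ρ * deriv (deriv (v n)) t = κ * (u n t - v n t)) := by
  have hα0 : 0 < α := by linarith
  set I : ℤ → ℝ := fun n => ∫ t in (0 : ℝ)..T, hertzForce α u n t
  have hflux : Function.Periodic I 1 := fun n =>
    intervalIntegral_hertzForce_succ hα0.le hu2 (hv2 n) (hperu n) (hperv n)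
      (fun t => by rw [hertzForce_succ]; exact heq1 n t) (heq2 n)
  have hconst (n : ℤ) : I n = I 0 := by simpa using hflux.int_mul n 0
  have hI0 : I 0 = 0 := by
    refine le_antisymm (nonpos_of_forall_le_rpow_mul (C := T) hα0 fun ε hε => ?_)
      (intervalIntegral.integral_nonneg hT.le fun t _ => hertzForce_nonneg t)
    obtain ⟨N, hN⟩ := hdecay ε hε
    rw [← hconst N]
    exact intervalIntegral_hertzForce_le hα0.le hT.le (hN N (by simp))
  have hmax (n : ℤ) (t : ℝ) : max (u (n - 1) t - u n t) 0 = 0 := by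
    have hF := (periodic_hertzForce hperu).eq_zero_of_intervalIntegral_eq_zero hT
      (continuous_hertzForce hα0.le fun k => (hu2 k).continuous) (fun t => hertzForce_nonneg t)
      ((hconst n).trans hI0)
    exact (hertzForce_eq_zero_iff hα0.ne' t).mp (congrFun hF t)
  refine ⟨hmax, fun n t => ?_, heq2⟩
  have hnext := hmax (n + 1) t
  rw [add_sub_cancel_right] at hnext
  rw [heq1, hmax, hnext, Real.zero_rpow hα0.ne']
  ring

/-- the locally resonant granular chain admits no nontrivial
time-periodic bright breather: for a T-periodic C² solution whose strains decay
at spatial infinity (uniformly in time), all Hertzian interaction forces vanish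
identically and the solution solves the linear uncoupled system. -/
theorem stmt5 (α κ ρ T : ℝ) (hα : 1 < α) (hκ : 0 < κ) (hρ : 0 < ρ) (hT : 0 < T)
    (u v : ℤ → ℝ → ℝ)
    (hu2 : ∀ n, ContDiff ℝ 2 (u n)) (hv2 : ∀ n, ContDiff ℝ 2 (v n))
    (hperu : ∀ n, Function.Periodic (u n) T)
    (hperv : ∀ n, Function.Periodic (v n) T)
    (heq1 : ∀ n t, deriv (deriv (u n)) t =
      (max (u (n-1) t - u n t) 0) ^ α - (max (u n t - u (n+1) t) 0) ^ α
        - κ * (u n t - v n t))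
    (heq2 : ∀ n t, ρ * deriv (deriv (v n)) t = κ * (u n t - v n t))
    (hdecay : ∀ ε > (0:ℝ), ∃ N : ℕ, ∀ n : ℤ, (N : ℤ) ≤ |n| →
      ∀ t : ℝ, |u n t - u (n-1) t| ≤ ε) :
    (∀ n t, max (u (n-1) t - u n t) 0 = 0) ∧
    (∀ n t, deriv (deriv (u n)) t = κ * (v n t - u n t)) ∧
    (∀ n t, ρ * deriv (deriv (v n)) t = κ * (u n t - v n t)) :=
  stmt5_general α κ ρ T hα hT u v hu2 hv2 hperu hperv heq1 heq2 hdecay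
end

section
/- Let δ⁻A_n = A_n − A_{n−1} and suppose δ⁻A_n(τ) = a e^{i(Ωτ − qn − φ)} and δ⁻B_n(τ) = b with a > 0, b ≤ 2κa. Then (A, B) solves the generalized DpS system 2iκω³ ∂_τ δ⁻A_n = δ⁺[h_α(δ⁻B_n,|δ⁻A_n|) δ⁻A_n] − δ⁺[h_α(δ⁻B_{n−1},|δ⁻A_{n−1}|) δ⁻A_{n−1}] (in strain form) if and only if Ω = (2/(κω³)) sin²(q/2) h_α(b, a). -/
/-!
Along a plane wave `x n τ = a e^{i(Ωτ - qn - φ)}` every strain has modulus `a`, so all the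
coefficients `h_α(b, |x_n|)` equal `h_α(b, a)` and the right-hand side becomes
`h_α(b, a)` times the second difference of `x` in `n`, which is `(2 cos q - 2) x_n = -4 sin²(q/2) x_n`.
The left-hand side is `2iκω³ · iΩ x_n = -2κω³Ω x_n`; cancelling `x_n ≠ 0` leaves the
dispersion relation.
-/

open Complex

theorem exp_sub_mul_I_add_exp_add_mul_I_sub_two_mul (θ q : ℝ) :
    exp ((θ - q) * I) + exp ((θ + q) * I) - 2 * exp (θ * I)
      = ((-(4 * Real.sin (q / 2) ^ 2) : ℝ) : ℂ) * exp (θ * I) := by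
  have hcos : cos (q : ℂ) = (exp (q * I) + exp (-(q * I))) / 2 := by
    rw [cos, neg_mul]
  have hsin : Real.sin (q / 2) ^ 2 = (1 - Real.cos q) / 2 := by
    rw [Real.sin_sq_eq_half_sub, mul_div_cancel₀ q two_ne_zero]
    ring
  rw [hsin]
  push_cast
  rw [hcos, sub_mul, add_mul, exp_sub, exp_add, exp_neg]
  field_simp
  ring

noncomputable def planeWave (a Ω q φ : ℝ) (n : ℤ) (τ : ℝ) : ℂ :=
  (a : ℂ) * exp (I * ((Ω * τ - q * n - φ : ℝ) : ℂ))

namespace planeWave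

variable {a : ℝ} (Ω q φ : ℝ) (n : ℤ) (τ : ℝ)

theorem norm_eq (ha : 0 ≤ a) : ‖planeWave a Ω q φ n τ‖ = a := by
  rw [planeWave, norm_mul, mul_comm I, norm_exp_ofReal_mul_I, norm_real, Real.norm_of_nonneg ha,
    mul_one]

theorem ne_zero (ha : a ≠ 0) : planeWave a Ω q φ n τ ≠ 0 :=
  mul_ne_zero (ofReal_ne_zero.mpr ha) (exp_ne_zero _)

theorem hasDerivAt :
    HasDerivAt (planeWave a Ω q φ n) (I * Ω * planeWave a Ω q φ n τ) τ := by
  have hphase : HasDerivAt (fun s : ℝ => I * ((Ω * s - q * n - φ : ℝ) : ℂ)) (I * Ω) τ := by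
    have := (((hasDerivAt_id τ).const_mul Ω).sub_const (q * n + φ)).ofReal_comp.const_mul I
    simpa [sub_sub] using this
  exact (hphase.cexp.const_mul (a : ℂ)).congr_deriv (by rw [planeWave]; ring)

theorem second_difference :
    planeWave a Ω q φ (n + 1) τ - 2 * planeWave a Ω q φ n τ + planeWave a Ω q φ (n - 1) τ
      = ((-(4 * Real.sin (q / 2) ^ 2) : ℝ) : ℂ) * planeWave a Ω q φ n τ := by
  have key := exp_sub_mul_I_add_exp_add_mul_I_sub_two_mul (Ω * τ - q * n - φ) q
  simp only [planeWave, mul_comm I]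
  rw [show (Ω * τ - q * ↑(n + 1) - φ : ℝ) = Ω * τ - q * n - φ - q by push_cast; ring,
    show (Ω * τ - q * ↑(n - 1) - φ : ℝ) = Ω * τ - q * n - φ + q by push_cast; ring]
  push_cast at key ⊢
  linear_combination (a : ℂ) * key

theorem strain_eq_iff (ha : a ≠ 0) (c H : ℝ) :
    (c : ℂ) * I * deriv (planeWave a Ω q φ n) τ
        = ((H : ℂ) * planeWave a Ω q φ (n + 1) τ - (H : ℂ) * planeWave a Ω q φ n τ)
          - ((H : ℂ) * planeWave a Ω q φ n τ - (H : ℂ) * planeWave a Ω q φ (n - 1) τ)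
      ↔ c * Ω = 4 * H * Real.sin (q / 2) ^ 2 := by
  have hlhs : (c : ℂ) * I * (I * Ω * planeWave a Ω q φ n τ)
      = ((-(c * Ω) : ℝ) : ℂ) * planeWave a Ω q φ n τ := by
    push_cast
    linear_combination c * Ω * planeWave a Ω q φ n τ * I_sq
  have hrhs : ((H : ℂ) * planeWave a Ω q φ (n + 1) τ - (H : ℂ) * planeWave a Ω q φ n τ)
        - ((H : ℂ) * planeWave a Ω q φ n τ - (H : ℂ) * planeWave a Ω q φ (n - 1) τ)
      = ((H * -(4 * Real.sin (q / 2) ^ 2) : ℝ) : ℂ) * planeWave a Ω q φ n τ := by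
    rw [ofReal_mul, mul_assoc, ← second_difference]
    ring
  rw [(hasDerivAt Ω q φ n τ).deriv, hlhs, hrhs, mul_left_inj' (ne_zero Ω q φ n τ ha), ofReal_inj]
  constructor <;> intro heq <;> linarith

end planeWave

theorem stmt11_general (κ ρ ω : ℝ) (hκ : 0 < κ) (hρ : 0 < ρ)
    (hω : ω = Real.sqrt (κ + κ / ρ))
    (h : ℝ → ℝ → ℝ)
    (a b q φ Ω : ℝ) (ha : 0 < a)
    (x : ℤ → ℝ → ℂ)
    (hx : ∀ (n : ℤ) (τ : ℝ),
      x n τ = (a : ℂ) * Complex.exp (Complex.I * ((Ω * τ - q * n - φ : ℝ) : ℂ))) :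
    (∀ (n : ℤ) (τ : ℝ),
      ((2 * κ * ω^3 : ℝ) : ℂ) * Complex.I * deriv (x n) τ =
        (((h b (‖x (n+1) τ‖) : ℝ) : ℂ) * x (n+1) τ
          - ((h b (‖x n τ‖) : ℝ) : ℂ) * x n τ)
        - (((h b (‖x n τ‖) : ℝ) : ℂ) * x n τ
          - ((h b (‖x (n-1) τ‖) : ℝ) : ℂ) * x (n-1) τ))
    ↔ Ω = (2 / (κ * ω^3)) * (Real.sin (q / 2))^2 * h b a := by
  have hω0 : 0 < ω := hω ▸ Real.sqrt_pos.mpr (by positivity)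
  obtain rfl : x = planeWave a Ω q φ := funext fun n => funext (hx n)
  simp only [planeWave.norm_eq _ _ _ _ _ ha.le, planeWave.strain_eq_iff _ _ _ _ _ ha.ne',
    forall_const]
  rw [div_mul_eq_mul_div, div_mul_eq_mul_div, eq_div_iff (by positivity)]
  constructor <;> intro H <;> linarith

/-- the plane-wave ansatz `δ⁻A_n(τ) = a e^{i(Ωτ − qn − φ)}`,
`δ⁻B_n = b` (with `a > 0`, `b ≤ 2κa`) solves the strain form of the generalized
DpS equation iff the nonlinear dispersion relation
`Ω = (2/(κω³)) sin²(q/2) h_α(b,a)` holds. -/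
theorem stmt11 (α κ ρ ω : ℝ) (hα : 1 < α) (hκ : 0 < κ) (hρ : 0 < ρ)
    (hω : ω = Real.sqrt (κ + κ / ρ))
    (h : ℝ → ℝ → ℝ)
    (hh : ∀ b r, h b r = (1 / (2 * Real.pi * r)) *
      ∫ t in (0:ℝ)..(2 * Real.pi),
        Real.cos t * (max (-b + 2 * κ * r * Real.cos t) 0) ^ α)
    (a b q φ Ω : ℝ) (ha : 0 < a) (hb : b ≤ 2 * κ * a)
    (x : ℤ → ℝ → ℂ)
    (hx : ∀ (n : ℤ) (τ : ℝ),
      x n τ = (a : ℂ) * Complex.exp (Complex.I * ((Ω * τ - q * n - φ : ℝ) : ℂ))) :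
    (∀ (n : ℤ) (τ : ℝ),
      ((2 * κ * ω^3 : ℝ) : ℂ) * Complex.I * deriv (x n) τ =
        (((h b (‖x (n+1) τ‖) : ℝ) : ℂ) * x (n+1) τ
          - ((h b (‖x n τ‖) : ℝ) : ℂ) * x n τ)
        - (((h b (‖x n τ‖) : ℝ) : ℂ) * x n τ
          - ((h b (‖x (n-1) τ‖) : ℝ) : ℂ) * x (n-1) τ))
    ↔ Ω = (2 / (κ * ω^3)) * (Real.sin (q / 2))^2 * h b a :=
  stmt11_general κ ρ ω hκ hρ hω h a b q φ Ω ha x hx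
end

section
/- Let α > 1 and G(u)_n = (u_{n−1} − u_n)_+^α − (u_n − u_{n+1})_+^α on ℓ_p. Then G is Fréchet differentiable and there exists C > 0 such that ‖DG(u)‖_{L(ℓ_p)} ≤ C‖u‖_p^{α−1} for all u ∈ ℓ_p (here ‖·‖_{L(ℓ_p)} is the operator norm); consequently G is Lipschitz on balls: ‖G(u) − G(w)‖_p ≤ C' max(‖u‖_p, ‖w‖_p)^{α−1} ‖u − w‖_p. -/
/-!
Write `S` for the shift `(S f) n = f (n + 1)` on `ℓ_p(ℤ)` and `φ x = (x)_+ ^ α`. Then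
`G = (1 - S) ∘ Φ ∘ (S⁻¹ - 1)`, where `Φ f = φ ∘ f` is the superposition operator of the `C¹`
function `φ`. Every coordinate of `f ∈ ℓ_p` is bounded by `‖f‖`, and `φ'` is uniformly continuous
on compact intervals, so the first-order Taylor remainder of `φ` is small uniformly in the
coordinates: `Φ` is Fréchet differentiable at `f`, its derivative being multiplication by
`φ' (f n) = α (f n)_+ ^ (α - 1)`, of norm at most `α ‖f‖ ^ (α - 1)`. The chain rule gives `DG`, and
the mean value inequality on the ball of radius `max ‖u‖ ‖w‖` turns the bound on `‖DG‖` into the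
Lipschitz estimate.
-/

open scoped ENNReal

theorem ContDiff.exists_pos_remainder_le {φ : ℝ → ℝ} (hφ : ContDiff ℝ 1 φ) (R : ℝ) {ε : ℝ}
    (hε : 0 < ε) :
    ∃ δ > 0, ∀ x h, |x| ≤ R → |h| < δ → |φ (x + h) - φ x - deriv φ x * h| ≤ ε * |h| := by
  obtain ⟨hdiff, hcont⟩ := contDiff_one_iff_deriv.1 hφ
  obtain ⟨δ, hδ, hunif⟩ := Metric.uniformContinuousOn_iff_le.1
    ((isCompact_closedBall (0 : ℝ) (R + 1)).uniformContinuousOn_of_continuous hcont.continuousOn)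
    ε hε
  refine ⟨min δ 1, lt_min hδ one_pos, fun x h hx hh => ?_⟩
  have hderiv : ∀ t ∈ Set.uIcc x (x + h), HasDerivWithinAt (fun s => φ s - deriv φ x * s)
      (deriv φ t - deriv φ x) (Set.uIcc x (x + h)) t := fun t _ => by
    have := (hdiff t).hasDerivAt.sub ((hasDerivAt_id' t).const_mul (deriv φ x))
    rw [mul_one] at this
    exact this.hasDerivWithinAt
  have hbound : ∀ t ∈ Set.uIcc x (x + h), ‖deriv φ t - deriv φ x‖ ≤ ε := fun t ht => by
    have htx : |t - x| ≤ |h| := by simpa using Set.abs_sub_left_of_mem_uIcc ht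
    have hh' := lt_min_iff.1 hh
    refine hunif t ?_ x ?_ ?_
    · rw [mem_closedBall_zero_iff, Real.norm_eq_abs]
      linarith [abs_sub_abs_le_abs_sub t x]
    · rw [mem_closedBall_zero_iff, Real.norm_eq_abs]
      linarith
    · rw [Real.dist_eq]
      linarith
  have := (convex_uIcc x (x + h)).norm_image_sub_le_of_norm_hasDerivWithin_le hderiv hbound
    Set.left_mem_uIcc Set.right_mem_uIcc
  rw [Real.norm_eq_abs, Real.norm_eq_abs, add_sub_cancel_left] at this
  convert this using 2
  ring

section PosPartRpow

variable {α : ℝ}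

theorem continuous_mul_max_zero_rpow (hα : 1 < α) :
    Continuous fun x : ℝ => α * max x 0 ^ (α - 1) :=
  continuous_const.mul <|
    (continuous_id.max continuous_const).rpow_const fun _ => Or.inr (by linarith)

theorem hasDerivAt_max_zero_rpow (hα : 1 < α) (x : ℝ) :
    HasDerivAt (fun x : ℝ => max x 0 ^ α) (α * max x 0 ^ (α - 1)) x := by
  have hderiv_ne : ∀ y : ℝ, y ≠ 0 →
      HasDerivAt (fun x : ℝ => max x 0 ^ α) (α * max y 0 ^ (α - 1)) y := by
    intro y hy
    rcases hy.lt_or_gt with hy | hy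
    · rw [max_eq_right hy.le, Real.zero_rpow (by linarith), mul_zero]
      refine (hasDerivAt_const y 0).congr_of_eventuallyEq ?_
      filter_upwards [eventually_lt_nhds hy] with z hz
      rw [max_eq_right hz.le, Real.zero_rpow (by linarith)]
    · rw [max_eq_left hy.le]
      refine (Real.hasDerivAt_rpow_const (Or.inl hy.ne')).congr_of_eventuallyEq ?_
      filter_upwards [eventually_gt_nhds hy] with z hz
      rw [max_eq_left hz.le]
  rcases eq_or_ne x 0 with rfl | hx
  · exact hasDerivAt_of_hasDerivAt_of_ne hderiv_ne
      ((continuous_id.max continuous_const).rpow_const fun _ => Or.inr (by linarith)).continuousAt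
      (continuous_mul_max_zero_rpow hα).continuousAt
  · exact hderiv_ne x hx

theorem deriv_max_zero_rpow (hα : 1 < α) :
    deriv (fun x : ℝ => max x 0 ^ α) = fun x => α * max x 0 ^ (α - 1) :=
  funext fun x => (hasDerivAt_max_zero_rpow hα x).deriv

theorem contDiff_max_zero_rpow (hα : 1 < α) : ContDiff ℝ 1 fun x : ℝ => max x 0 ^ α :=
  contDiff_one_iff_deriv.2 ⟨fun x => (hasDerivAt_max_zero_rpow hα x).differentiableAt,
    deriv_max_zero_rpow hα ▸ continuous_mul_max_zero_rpow hα⟩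

theorem abs_mul_max_zero_rpow_le (hα : 1 < α) {x R : ℝ} (hx : |x| ≤ R) :
    |α * max x 0 ^ (α - 1)| ≤ α * R ^ (α - 1) := by
  rw [abs_of_nonneg (by positivity)]
  gcongr
  exact max_le ((le_abs_self x).trans hx) ((abs_nonneg x).trans hx)

end PosPartRpow

theorem norm_sub_le_of_hasFDerivAt_of_norm_le_rpow {E F : Type*} [NormedAddCommGroup E]
    [NormedSpace ℝ E] [NormedAddCommGroup F] [NormedSpace ℝ F] {f : E → F} {f' : E → E →L[ℝ] F}
    {C β : ℝ} (hC : 0 ≤ C) (hβ : 0 ≤ β) (hf : ∀ x, HasFDerivAt f (f' x) x)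
    (hf' : ∀ x, ‖f' x‖ ≤ C * ‖x‖ ^ β) (x y : E) :
    ‖f x - f y‖ ≤ C * max ‖x‖ ‖y‖ ^ β * ‖x - y‖ := by
  refine (convex_closedBall 0 (max ‖x‖ ‖y‖)).norm_image_sub_le_of_norm_hasFDerivWithin_le
    (fun z _ => (hf z).hasFDerivWithinAt) (fun z hz => (hf' z).trans ?_)
    (mem_closedBall_zero_iff.2 (le_max_right _ _)) (mem_closedBall_zero_iff.2 (le_max_left _ _))
  gcongr
  exact mem_closedBall_zero_iff.1 hz

theorem Memℓp.comp_equiv {ι ι' E : Type*} [NormedAddCommGroup E] {p : ℝ≥0∞} {f : ι → E}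
    (hf : Memℓp f p) (e : ι' ≃ ι) : Memℓp (f ∘ e) p := by
  rcases p.trichotomy with rfl | rfl | hp
  · exact memℓp_zero (hf.finite_dsupport.preimage e.injective.injOn)
  · refine memℓp_infty ?_
    simpa only [Function.comp_def] using
      (e.surjective.range_comp fun i => ‖f i‖) ▸ hf.bddAbove
  · exact memℓp_gen ((e.summable_iff (f := fun i => ‖f i‖ ^ p.toReal)).mpr (hf.summable hp))

noncomputable section

namespace lp

variable {ι : Type*} {p : ℝ≥0∞} [Fact (1 ≤ p)]

section Reindex

variable {ι' E : Type*} [NormedAddCommGroup E] [NormedSpace ℝ E]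

def compEquiv (e : ι' ≃ ι) : lp (fun _ : ι => E) p →ₗᵢ[ℝ] lp (fun _ : ι' => E) p where
  toFun f := ⟨f ∘ e, (lp.memℓp f).comp_equiv e⟩
  map_add' _ _ := rfl
  map_smul' _ _ := rfl
  norm_map' f := by
    rcases p.dichotomy with rfl | hp
    · exact e.iSup_comp (g := fun i => ‖f i‖)
    · have hp' : 0 < p.toReal := zero_lt_one.trans_le hp
      rw [norm_eq_tsum_rpow hp', norm_eq_tsum_rpow hp']
      exact congrArg (· ^ (1 / p.toReal)) (e.tsum_eq fun i => ‖f i‖ ^ p.toReal)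

def shift (k : ℤ) : lp (fun _ : ℤ => E) p →L[ℝ] lp (fun _ : ℤ => E) p :=
  (compEquiv (Equiv.addRight k)).toContinuousLinearMap

@[simp] theorem shift_apply (k : ℤ) (f : lp (fun _ : ℤ => E) p) (n : ℤ) :
    shift k f n = f (n + k) := rfl

theorem norm_shift_sub_one_le (k : ℤ) :
    ‖(shift k - 1 : lp (fun _ : ℤ => E) p →L[ℝ] lp (fun _ : ℤ => E) p)‖ ≤ 2 :=
  calc _ ≤ ‖(shift k : lp (fun _ : ℤ => E) p →L[ℝ] _)‖ + ‖(1 : lp (fun _ : ℤ => E) p →L[ℝ] _)‖ :=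
        norm_sub_le _ _
    _ ≤ 1 + 1 := add_le_add (LinearIsometry.norm_toContinuousLinearMap_le _)
        ContinuousLinearMap.norm_id_le
    _ = 2 := one_add_one_eq_two

end Reindex

theorem abs_apply_le_norm (f : lp (fun _ : ι => ℝ) p) (i : ι) : |f i| ≤ ‖f‖ :=
  norm_apply_le_norm (zero_lt_one.trans_le Fact.out).ne' f i

def mulCLM (c : ι → ℝ) {K : ℝ} (hK : 0 ≤ K) (hc : ∀ i, |c i| ≤ K) :
    lp (fun _ : ι => ℝ) p →L[ℝ] lp (fun _ : ι => ℝ) p :=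
  mapCLM p (fun i => ContinuousLinearMap.toSpanSingleton ℝ (c i)) hK fun i =>
    (ContinuousLinearMap.norm_toSpanSingleton (c i)).trans_le (hc i)

@[simp] theorem mulCLM_apply (c : ι → ℝ) {K : ℝ} (hK : 0 ≤ K) (hc : ∀ i, |c i| ≤ K)
    (f : lp (fun _ : ι => ℝ) p) (i : ι) : mulCLM c hK hc f i = c i * f i := mul_comm _ _

theorem norm_mulCLM_le (c : ι → ℝ) {K : ℝ} (hK : 0 ≤ K) (hc : ∀ i, |c i| ≤ K) :
    ‖(mulCLM c hK hc : lp (fun _ : ι => ℝ) p →L[ℝ] _)‖ ≤ K :=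
  norm_mapCLM_le p _ hK _

variable {φ : ℝ → ℝ}

theorem memℓp_comp (hφ : ContDiff ℝ 1 φ) (hφ0 : φ 0 = 0) (f : lp (fun _ : ι => ℝ) p) :
    Memℓp (φ ∘ f) p := by
  obtain ⟨K, hK⟩ := hφ.locallyLipschitz.locallyLipschitzOn.exists_lipschitzOnWith_of_compact
    (isCompact_closedBall (0 : ℝ) ‖f‖)
  have hf : ∀ i, f i ∈ Metric.closedBall (0 : ℝ) ‖f‖ := fun i =>
    mem_closedBall_zero_iff.2 (abs_apply_le_norm f i)
  refine ((lp.memℓp f).norm.const_mul (K : ℝ)).mono fun i => ?_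
  simpa [hφ0] using hK.norm_sub_le (hf i) (Metric.mem_closedBall_self (norm_nonneg f))

def superposition (hφ : ContDiff ℝ 1 φ) (hφ0 : φ 0 = 0) (f : lp (fun _ : ι => ℝ) p) :
    lp (fun _ : ι => ℝ) p :=
  ⟨φ ∘ f, memℓp_comp hφ hφ0 f⟩

@[simp] theorem superposition_apply (hφ : ContDiff ℝ 1 φ) (hφ0 : φ 0 = 0)
    (f : lp (fun _ : ι => ℝ) p) (i : ι) : superposition hφ hφ0 f i = φ (f i) := rfl

theorem hasFDerivAt_superposition (hφ : ContDiff ℝ 1 φ) (hφ0 : φ 0 = 0)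
    (f : lp (fun _ : ι => ℝ) p) {K : ℝ} (hK : 0 ≤ K) (hφ' : ∀ i, |deriv φ (f i)| ≤ K) :
    HasFDerivAt (superposition hφ hφ0) (mulCLM (fun i => deriv φ (f i)) hK hφ') f := by
  rw [hasFDerivAt_iff_isLittleO_nhds_zero, Asymptotics.isLittleO_iff]
  intro ε hε
  obtain ⟨δ, hδ, hrem⟩ := hφ.exists_pos_remainder_le ‖f‖ hε
  filter_upwards [Metric.ball_mem_nhds 0 hδ] with g hg
  rw [mem_ball_zero_iff] at hg
  calc _ ≤ ‖ε • g‖ := norm_mono (zero_lt_one.trans_le Fact.out).ne' fun i => by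
          simpa [abs_of_pos hε] using hrem (f i) (g i) (abs_apply_le_norm f i)
            ((abs_apply_le_norm g i).trans_lt hg)
    _ = ε * ‖g‖ := by rw [norm_smul, Real.norm_of_nonneg hε.le]

end lp

end

/-- the Hertzian map `G` on `ℓ_p` is Fréchet differentiable with
`‖DG(u)‖ ≤ C‖u‖^{α−1}`, and consequently Lipschitz on balls. -/
theorem stmt14 (α : ℝ) (hα : 1 < α) (p : ℝ≥0∞) [Fact (1 ≤ p)]
    (G : lp (fun _ : ℤ => ℝ) p → lp (fun _ : ℤ => ℝ) p)
    (hG : ∀ (u : lp (fun _ : ℤ => ℝ) p) (n : ℤ),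
      (G u : ∀ _ : ℤ, ℝ) n =
        (max ((u : ∀ _ : ℤ, ℝ) (n-1) - (u : ∀ _ : ℤ, ℝ) n) 0) ^ α
          - (max ((u : ∀ _ : ℤ, ℝ) n - (u : ∀ _ : ℤ, ℝ) (n+1)) 0) ^ α) :
    (∃ C : ℝ, 0 < C ∧ ∀ u : lp (fun _ : ℤ => ℝ) p,
      ∃ D : lp (fun _ : ℤ => ℝ) p →L[ℝ] lp (fun _ : ℤ => ℝ) p,
        HasFDerivAt G D u ∧ ‖D‖ ≤ C * ‖u‖ ^ (α - 1)) ∧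
    (∃ C' : ℝ, 0 < C' ∧ ∀ u w : lp (fun _ : ℤ => ℝ) p,
      ‖G u - G w‖ ≤ C' * (max ‖u‖ ‖w‖) ^ (α - 1) * ‖u - w‖) := by
  have hφ0 : max (0 : ℝ) 0 ^ α = 0 := by rw [max_self, Real.zero_rpow (by linarith)]
  let Φ := lp.superposition (ι := ℤ) (p := p) (contDiff_max_zero_rpow hα) hφ0
  let A : lp (fun _ : ℤ => ℝ) p →L[ℝ] lp (fun _ : ℤ => ℝ) p := lp.shift (-1) - 1
  let T : lp (fun _ : ℤ => ℝ) p →L[ℝ] lp (fun _ : ℤ => ℝ) p := 1 - lp.shift 1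
  have hGΦ : G = fun u => T (Φ (A u)) := by
    funext u
    ext n
    simp [hG, Φ, A, T, sub_eq_add_neg]
  have hK : ∀ u : lp (fun _ : ℤ => ℝ) p, 0 ≤ α * (2 * ‖u‖) ^ (α - 1) := fun u => by positivity
  have hΦ' : ∀ u i, |deriv (fun x : ℝ => max x 0 ^ α) (A u i)| ≤ α * (2 * ‖u‖) ^ (α - 1) :=
    fun u i => deriv_max_zero_rpow hα ▸ abs_mul_max_zero_rpow_le hα
      ((lp.abs_apply_le_norm _ i).trans (A.le_of_opNorm_le (lp.norm_shift_sub_one_le (-1)) u))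
  let DG u := T ∘L lp.mulCLM _ (hK u) (hΦ' u) ∘L A
  have hDG : ∀ u, HasFDerivAt G (DG u) u := fun u => hGΦ ▸ T.hasFDerivAt.comp u
    ((lp.hasFDerivAt_superposition _ hφ0 _ (hK u) (hΦ' u)).comp u A.hasFDerivAt)
  have hC : 0 < 4 * α * 2 ^ (α - 1) := by positivity
  have hDG_le : ∀ u, ‖DG u‖ ≤ 4 * α * 2 ^ (α - 1) * ‖u‖ ^ (α - 1) := fun u =>
    calc ‖DG u‖ ≤ ‖T‖ * (‖lp.mulCLM _ (hK u) (hΦ' u)‖ * ‖A‖) :=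
          (T.opNorm_comp_le _).trans (by gcongr; exact ContinuousLinearMap.opNorm_comp_le _ _)
      _ ≤ 2 * (α * (2 * ‖u‖) ^ (α - 1) * 2) := by
          gcongr
          · exact (norm_sub_rev _ _).trans_le (lp.norm_shift_sub_one_le 1)
          · exact lp.norm_mulCLM_le _ _ _
          · exact lp.norm_shift_sub_one_le (-1)
      _ = 4 * α * 2 ^ (α - 1) * ‖u‖ ^ (α - 1) := by
          rw [Real.mul_rpow zero_le_two (norm_nonneg u)]
          ring
  exact ⟨⟨_, hC, fun u => ⟨DG u, hDG u, hDG_le u⟩⟩,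
    ⟨_, hC, norm_sub_le_of_hasFDerivAt_of_norm_le_rpow hC.le (by linarith) hDG hDG_le⟩⟩
end

section
/- Gronwall step for the resonator component: let T, ε, σ, M > 0 with σ ≤ C_r ε^{2(α−1)}, α > 1, and let R, F : [0, t_ε] → ℓ_p be continuous with t_ε ≤ T ε^{1−α}, ‖F(s)‖_p ≤ K(2Mε)^α for all s, and R(t) = Ṙ(0)t + R(0) + χσ∫₀^t (t−s)F(s) ds with 0 < χ ≤ 1. If ‖R(0)‖_p ≤ Cε^α and ‖Ṙ(0)‖_p ≤ Cε^{2α−1}, then ‖R(t)‖_p ≤ C'ε^α for all t ∈ [0, t_ε], where C' depends only on C, C_r, T, K, M, α. -/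
/-!
On `[0, t]` the Duhamel term is bounded by `χ σ ‖F‖∞ t² / 2`. On the time scale
`t ≤ T ε^{1-α}` the secular factor `σ t²` is at most `C_r T²`, since
`ε^{2(α-1)} (ε^{1-α})² = 1`, so this term is `O(‖F‖∞) = O(ε^α)`.
Likewise `t ‖Ṙ(0)‖ ≤ C T ε^{1-α} ε^{2α-1} = C T ε^α`.
-/

open MeasureTheory

theorem integral_sub_mul_const (t B : ℝ) :
    ∫ s in (0:ℝ)..t, (t - s) * B = B * t ^ 2 / 2 := by
  rw [intervalIntegral.integral_mul_const, intervalIntegral.integral_sub intervalIntegrable_const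
    intervalIntegral.intervalIntegrable_id, integral_id, intervalIntegral.integral_const]
  simp only [sub_zero, smul_eq_mul]
  ring

theorem norm_integral_sub_smul_le {E : Type*} [NormedAddCommGroup E] [NormedSpace ℝ E]
    {F : ℝ → E} {t B : ℝ} (ht : 0 ≤ t) (hF : ∀ s ∈ Set.Icc 0 t, ‖F s‖ ≤ B) :
    ‖∫ s in (0:ℝ)..t, (t - s) • F s‖ ≤ B * t ^ 2 / 2 := by
  rw [← integral_sub_mul_const]
  refine intervalIntegral.norm_integral_le_of_norm_le ht (Filter.Eventually.of_forall ?_)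
    ((by fun_prop : Continuous fun s => (t - s) * B).intervalIntegrable _ _)
  rintro s ⟨hs0, hst⟩
  rw [norm_smul, Real.norm_of_nonneg (sub_nonneg.2 hst)]
  exact mul_le_mul_of_nonneg_left (hF s ⟨hs0.le, hst⟩) (sub_nonneg.2 hst)

theorem norm_duhamel_le {E : Type*} [NormedAddCommGroup E] [NormedSpace ℝ E]
    {F : ℝ → E} {t c B : ℝ} (v u : E) (ht : 0 ≤ t) (hc : 0 ≤ c)
    (hF : ∀ s ∈ Set.Icc 0 t, ‖F s‖ ≤ B) :
    ‖t • v + u + c • ∫ s in (0:ℝ)..t, (t - s) • F s‖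
      ≤ t * ‖v‖ + ‖u‖ + c * (B * t ^ 2 / 2) := by
  refine norm_add₃_le.trans ?_
  rw [norm_smul, norm_smul, Real.norm_of_nonneg ht, Real.norm_of_nonneg hc]
  gcongr
  exact norm_integral_sub_smul_le ht hF

section Scaling

variable {ε α T t : ℝ}

theorem mul_le_of_le_rpow_one_sub (hε : 0 < ε) (ht : 0 ≤ t) (htT : t ≤ T * ε ^ (1 - α))
    {C x : ℝ} (hC : 0 ≤ C) (hx : x ≤ C * ε ^ (2 * α - 1)) : t * x ≤ C * T * ε ^ α := by
  calc t * x ≤ t * (C * ε ^ (2 * α - 1)) := mul_le_mul_of_nonneg_left hx ht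
    _ ≤ T * ε ^ (1 - α) * (C * ε ^ (2 * α - 1)) := by gcongr
    _ = C * T * ε ^ (1 - α + (2 * α - 1)) := by rw [Real.rpow_add hε]; ring
    _ = C * T * ε ^ α := by ring_nf

theorem mul_sq_le_of_le_rpow_one_sub (hε : 0 < ε) (ht : 0 ≤ t) (htT : t ≤ T * ε ^ (1 - α))
    {Cr σ : ℝ} (hσ : 0 ≤ σ) (hσle : σ ≤ Cr * ε ^ (2 * (α - 1))) :
    σ * t ^ 2 ≤ Cr * T ^ 2 := by
  calc σ * t ^ 2 ≤ Cr * ε ^ (2 * (α - 1)) * (T * ε ^ (1 - α)) ^ 2 := by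
        gcongr
        exact hσ.trans hσle
    _ = Cr * T ^ 2 * ε ^ (2 * (α - 1) + (1 - α) + (1 - α)) := by
        rw [Real.rpow_add hε, Real.rpow_add hε]; ring
    _ = Cr * T ^ 2 := by ring_nf; simp

end Scaling

theorem stmt15_general (C Cr T K M α : ℝ)
    (hC : 0 < C) (hCr : 0 < Cr) (hT : 0 < T) (hK : 0 < K) (hM : 0 < M) :
    ∃ C' : ℝ, 0 < C' ∧
      ∀ (E : Type) [NormedAddCommGroup E] [NormedSpace ℝ E] [CompleteSpace E],
      ∀ (ε σ χ tε : ℝ) (R F : ℝ → E) (R0 R0' : E),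
        0 < ε → 0 < σ → σ ≤ Cr * ε ^ (2 * (α - 1)) →
        0 < χ → χ ≤ 1 →
        0 < tε → tε ≤ T * ε ^ (1 - α) →
        ContinuousOn F (Set.Icc 0 tε) →
        (∀ s ∈ Set.Icc (0:ℝ) tε, ‖F s‖ ≤ K * (2 * M * ε) ^ α) →
        (∀ t ∈ Set.Icc (0:ℝ) tε,
          R t = t • R0' + R0 + (χ * σ) • ∫ s in (0:ℝ)..t, (t - s) • F s) →
        ‖R0‖ ≤ C * ε ^ α → ‖R0'‖ ≤ C * ε ^ (2 * α - 1) →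
        ∀ t ∈ Set.Icc (0:ℝ) tε, ‖R t‖ ≤ C' * ε ^ α := by
  refine ⟨C * T + C + Cr * T ^ 2 * (K * (2 * M) ^ α) / 2, by positivity, ?_⟩
  intro E _ _ _ ε σ χ tε R F R0 R0' hε hσ hσle hχ hχ1 _ htεle _ hFb hR hR0 hR0' t ht
  have htT : t ≤ T * ε ^ (1 - α) := ht.2.trans htεle
  have hforce : ∀ s ∈ Set.Icc 0 t, ‖F s‖ ≤ K * (2 * M) ^ α * ε ^ α := fun s hs => by
    rw [mul_assoc, ← Real.mul_rpow (by positivity) hε.le]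
    exact hFb s ⟨hs.1, hs.2.trans ht.2⟩
  have hsecular : χ * σ * t ^ 2 ≤ Cr * T ^ 2 :=
    calc χ * σ * t ^ 2 ≤ σ * t ^ 2 := by
          rw [mul_assoc]; exact mul_le_of_le_one_left (by positivity) hχ1
      _ ≤ Cr * T ^ 2 := mul_sq_le_of_le_rpow_one_sub hε ht.1 htT hσ.le hσle
  rw [hR t ht]
  calc _ ≤ t * ‖R0'‖ + ‖R0‖ + χ * σ * (K * (2 * M) ^ α * ε ^ α * t ^ 2 / 2) :=
        norm_duhamel_le R0' R0 ht.1 (by positivity) hforce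
    _ ≤ C * T * ε ^ α + C * ε ^ α + Cr * T ^ 2 * (K * (2 * M) ^ α * ε ^ α / 2) := by
        refine add_le_add (add_le_add (mul_le_of_le_rpow_one_sub hε ht.1 htT hC.le hR0') hR0) ?_
        calc _ = χ * σ * t ^ 2 * (K * (2 * M) ^ α * ε ^ α / 2) := by ring
          _ ≤ _ := by gcongr
    _ = _ := by ring

/-- Gronwall step for the resonator component: under the smallness
assumption `σ ≤ C_r ε^{2(α−1)}`, `tε ≤ T ε^{1−α}`, an `O(ε^α)` force bound and
`O(ε^α)`, `O(ε^{2α−1})` initial data, the double integral representation of `R`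
yields `‖R(t)‖ ≤ C' ε^α` on `[0, tε]`, with `C'` depending only on
`C, C_r, T, K, M, α`. -/
theorem stmt15 (C Cr T K M α : ℝ)
    (hC : 0 < C) (hCr : 0 < Cr) (hT : 0 < T) (hK : 0 < K) (hM : 0 < M)
    (hα : 1 < α) :
    ∃ C' : ℝ, 0 < C' ∧
      ∀ (E : Type) [NormedAddCommGroup E] [NormedSpace ℝ E] [CompleteSpace E],
      ∀ (ε σ χ tε : ℝ) (R F : ℝ → E) (R0 R0' : E),
        0 < ε → 0 < σ → σ ≤ Cr * ε ^ (2 * (α - 1)) →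
        0 < χ → χ ≤ 1 →
        0 < tε → tε ≤ T * ε ^ (1 - α) →
        ContinuousOn F (Set.Icc 0 tε) →
        (∀ s ∈ Set.Icc (0:ℝ) tε, ‖F s‖ ≤ K * (2 * M * ε) ^ α) →
        (∀ t ∈ Set.Icc (0:ℝ) tε,
          R t = t • R0' + R0 + (χ * σ) • ∫ s in (0:ℝ)..t, (t - s) • F s) →
        ‖R0‖ ≤ C * ε ^ α → ‖R0'‖ ≤ C * ε ^ (2 * α - 1) →
        ∀ t ∈ Set.Icc (0:ℝ) tε, ‖R t‖ ≤ C' * ε ^ α :=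
  stmt15_general C Cr T K M α hC hCr hT hK hM
end
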